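/- Let M ⊆ ℝ^m be a Lebesgue measurable set, let (p_n)_{n∈ℕ} and p be bounded measurable variable exponents on M with p_n(x) → p(x) as n → ∞ for a.e. x ∈ M, and let u : M → ℝ^ℓ be measurable. Then ‖u‖_{p(·),M} ≤ liminf_{n→∞} ‖u‖_{p_n(·),M}, where ‖·‖_{r(·),M} is the Luxemburg norm. -/

import Mathlib

open MeasureTheory ENNReal

/-- The modular `ρ_{r(·),M}(u) = ∫_M |u(x)|^{r(x)} dx` (as an extended nonnegative real). -/
noncomputable def modular {E : Type*} [MeasurableSpace E] (μ : Measure E)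
    (M : Set E) (r : E → ℝ) (u : E → ℝ) : ℝ≥0∞ :=
  ∫⁻ x in M, ENNReal.ofReal (|u x| ^ (r x)) ∂μ

/-- The Luxemburg norm `‖u‖_{r(·),M} = inf{λ > 0 : ρ_{r(·),M}(u/λ) ≤ 1}`
(with value `∞` if no such `λ` exists). -/
noncomputable def luxNorm {E : Type*} [MeasurableSpace E] (μ : Measure E)
    (M : Set E) (r : E → ℝ) (u : E → ℝ) : ℝ≥0∞ :=
  sInf {c : ℝ≥0∞ | ∃ lam : ℝ, 0 < lam ∧ c = ENNReal.ofReal lam ∧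
    modular μ M r (fun x => u x / lam) ≤ 1}

/-
Fix `λ > 0` with `λ > liminf ‖u‖_{p_n}`. For infinitely many `n` some `λ' < λ` is admissible for
`p_n`, and since the modular decreases in the scaling parameter, `ρ_{p_n}(u/λ) ≤ 1` for those `n`.
Pointwise `|u/λ|^{p_n} → |u/λ|^p` a.e. (the limit exponent is positive, so this holds also where
`u = 0`), hence Fatou's lemma gives `ρ_p(u/λ) ≤ liminf ρ_{p_n}(u/λ) ≤ 1`, i.e. `‖u‖_p ≤ λ`.
-/

section LuxemburgNorm

variable {E : Type*} [MeasurableSpace E] {μ : Measure E} {M : Set E}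

lemma modular_div_antitone {r : E → ℝ} (hr : ∀ᵐ x ∂μ.restrict M, 0 ≤ r x) (u : E → ℝ)
    {lam lam' : ℝ} (hlam' : 0 < lam') (hle : lam' ≤ lam) :
    modular μ M r (fun x => u x / lam) ≤ modular μ M r (fun x => u x / lam') := by
  refine lintegral_mono_ae (hr.mono fun x hrx => ENNReal.ofReal_le_ofReal ?_)
  refine Real.rpow_le_rpow (abs_nonneg _) ?_ hrx
  rw [abs_div, abs_div, abs_of_pos hlam', abs_of_pos (hlam'.trans_le hle)]
  exact div_le_div_of_nonneg_left (abs_nonneg _) hlam' hle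

lemma modular_div_le_one_of_luxNorm_lt {r : E → ℝ} (hr : ∀ᵐ x ∂μ.restrict M, 0 ≤ r x)
    {u : E → ℝ} {lam : ℝ} (hlam : 0 < lam) (h : luxNorm μ M r u < ENNReal.ofReal lam) :
    modular μ M r (fun x => u x / lam) ≤ 1 := by
  obtain ⟨_, ⟨lam', hlam', rfl, hmod⟩, hlt⟩ := sInf_lt_iff.mp h
  rw [ENNReal.ofReal_lt_ofReal_iff hlam] at hlt
  exact (modular_div_antitone hr u hlam' hlt.le).trans hmod

lemma luxNorm_le_of_modular_div_le_one {r u : E → ℝ} {lam : ℝ} (hlam : 0 < lam)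
    (h : modular μ M r (fun x => u x / lam) ≤ 1) :
    luxNorm μ M r u ≤ ENNReal.ofReal lam :=
  sInf_le ⟨lam, hlam, rfl, h⟩

lemma modular_le_liminf_of_tendsto {r : ℕ → E → ℝ} {q : E → ℝ} {v : E → ℝ}
    (hr : ∀ n, AEMeasurable (r n) (μ.restrict M)) (hv : AEMeasurable v (μ.restrict M))
    (hq : ∀ᵐ x ∂μ.restrict M, 0 < q x)
    (hconv : ∀ᵐ x ∂μ.restrict M, Filter.Tendsto (fun n => r n x) Filter.atTop (nhds (q x))) :
    modular μ M q v ≤ Filter.liminf (fun n => modular μ M (r n) v) Filter.atTop := by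
  have hlim : (fun x => ENNReal.ofReal (|v x| ^ q x)) =ᵐ[μ.restrict M]
      fun x => Filter.liminf (fun n => ENNReal.ofReal (|v x| ^ r n x)) Filter.atTop := by
    filter_upwards [hq, hconv] with x hqx hx
    exact ((ENNReal.continuous_ofReal.tendsto _).comp
      (tendsto_const_nhds.rpow hx (Or.inr hqx))).liminf_eq.symm
  calc modular μ M q v
      = ∫⁻ x in M, Filter.liminf (fun n => ENNReal.ofReal (|v x| ^ r n x)) Filter.atTop ∂μ :=
        lintegral_congr_ae hlim
    _ ≤ Filter.liminf (fun n => modular μ M (r n) v) Filter.atTop :=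
        lintegral_liminf_le' fun n => (hv.abs.pow (hr n)).ennreal_ofReal

end LuxemburgNorm

theorem stmt_17_general {m : ℕ} (M : Set (EuclideanSpace ℝ (Fin m))) (hMmeas : MeasurableSet M)
    (pn : ℕ → EuclideanSpace ℝ (Fin m) → ℝ) (p : EuclideanSpace ℝ (Fin m) → ℝ)
    (hpn : ∀ n, Measurable (pn n))
    (hpn1 : ∀ n, ∀ x ∈ M, 1 ≤ pn n x) (hp1 : ∀ x ∈ M, 1 ≤ p x)
    (hconv : ∀ᵐ x ∂(volume.restrict M),
      Filter.Tendsto (fun n => pn n x) Filter.atTop (nhds (p x)))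
    (u : EuclideanSpace ℝ (Fin m) → ℝ) (hu : Measurable u) :
    luxNorm volume M p u ≤ Filter.liminf (fun n => luxNorm volume M (pn n) u) Filter.atTop := by
  refine le_of_forall_gt_imp_ge_of_dense fun d hd => ?_
  rcases eq_or_ne d ⊤ with rfl | hd_top
  · exact le_top
  set lam := d.toReal
  have hlam : 0 < lam := toReal_pos (zero_le.trans_lt hd).ne' hd_top
  rw [← ofReal_toReal hd_top] at hd ⊢
  have hfreq : ∃ᶠ n in Filter.atTop, modular volume M (pn n) (fun x => u x / lam) ≤ 1 :=
    (Filter.frequently_lt_of_liminf_lt (by isBoundedDefault) hd).mono fun n hn =>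
      modular_div_le_one_of_luxNorm_lt
        (ae_restrict_of_forall_mem hMmeas fun x hx => zero_le_one.trans (hpn1 n x hx)) hlam hn
  have hfatou := modular_le_liminf_of_tendsto (fun n => (hpn n).aemeasurable)
    (hu.div_const lam).aemeasurable
    (ae_restrict_of_forall_mem hMmeas fun x hx => zero_lt_one.trans_le (hp1 x hx)) hconv
  exact luxNorm_le_of_modular_div_le_one hlam
    (hfatou.trans (Filter.liminf_le_of_frequently_le' hfreq))

theorem stmt_17 {m : ℕ} (M : Set (EuclideanSpace ℝ (Fin m))) (hMmeas : MeasurableSet M)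
    (pn : ℕ → EuclideanSpace ℝ (Fin m) → ℝ) (p : EuclideanSpace ℝ (Fin m) → ℝ)
    (hpn : ∀ n, Measurable (pn n)) (hp : Measurable p)
    (hpn1 : ∀ n, ∀ x ∈ M, 1 ≤ pn n x) (hp1 : ∀ x ∈ M, 1 ≤ p x)
    (hpnbdd : ∀ n, ∃ C, ∀ x ∈ M, pn n x ≤ C) (hpbdd : ∃ C, ∀ x ∈ M, p x ≤ C)
    (hconv : ∀ᵐ x ∂(volume.restrict M),
      Filter.Tendsto (fun n => pn n x) Filter.atTop (nhds (p x)))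
    (u : EuclideanSpace ℝ (Fin m) → ℝ) (hu : Measurable u) :
    luxNorm volume M p u ≤ Filter.liminf (fun n => luxNorm volume M (pn n) u) Filter.atTop :=
  stmt_17_general M hMmeas pn p hpn hpn1 hp1 hconv u hu
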